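/- Let K be a field complete with respect to a nontrivial non-archimedean absolute value, with valuation ring R a discrete valuation ring. Let φ = Σ_{i≥1} c_i X^i ∈ K⟦X⟧ have positive radius of convergence and satisfy |c₁| = 1 (i.e. φ'(0) is a unit of R). Define λ₁ = inf_{i≥1} (−log|c_{i+1}|)/i ∈ (−∞, +∞], with the convention −log 0 = +∞ (so λ₁ = +∞ when c_{i+1} = 0 for all i ≥ 1). Then the supremum of the set of all r ∈ (0,1] at which the graph of φ is analytically trivialized equals min(1, exp λ₁). (This is Proposition 3.6, part 2: the size of the graph of φ with respect to 𝔸²_R equals min(1, exp λ₁), where λ₁ is the first slope of the Newton polygon of φ(x)/x.) -/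

import Mathlib

noncomputable section

open Filter PowerSeries

namespace NA

/-- The valuation ring `R = {x : K | ‖x‖ ≤ 1}` of a nonarchimedean normed field. -/
def integers (K : Type*) [NormedField K] [IsUltrametricDist K] : Subring K where
  carrier := {x : K | ‖x‖ ≤ 1}
  mul_mem' {a b} ha hb := by
    simp only [Set.mem_setOf_eq, norm_mul] at *
    calc ‖a‖ * ‖b‖ ≤ 1 * 1 := mul_le_mul ha hb (norm_nonneg _) zero_le_one
    _ = 1 := one_mul 1
  one_mem' := by simp
  add_mem' {a b} ha hb := (IsUltrametricDist.norm_add_le_max a b).trans (max_le ha hb)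
  zero_mem' := by simp
  neg_mem' {a} ha := by simpa using ha

/-- Composition `φ ∘ ψ` of formal power series in one variable
(this gives `φ(ψ)` whenever `ψ` has zero constant term). -/
def comp {K : Type*} [CommSemiring K] (φ ψ : PowerSeries K) : PowerSeries K :=
  PowerSeries.mk fun n =>
    ∑ k ∈ Finset.range (n + 1), PowerSeries.coeff k φ * PowerSeries.coeff n (ψ ^ k)

/-- The one-variable series `T ↦ f(T, 0)` obtained from a two-variable series `f`. -/
def line1 {K : Type*} [CommSemiring K] (f : MvPowerSeries (Fin 2) K) : PowerSeries K :=
  PowerSeries.mk fun n => MvPowerSeries.coeff (Finsupp.single (0 : Fin 2) n) f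

/-- The statement `‖f‖_r ≤ c`, where `‖f‖_r = sup_I ‖a_I‖ r^{|I|}` is the Gauss norm of the
multivariate formal power series `f = Σ_I a_I X^I`. -/
def NormLE {K : Type*} [NormedField K] {N : ℕ} (r : ℝ) (f : MvPowerSeries (Fin N) K)
    (c : ℝ) : Prop :=
  ∀ I : Fin N →₀ ℕ, ‖MvPowerSeries.coeff I f‖ * r ^ (∑ j, I j) ≤ c

/-- The graph of `φ` is analytically trivialized at radius `r`: there is a pair
`f = (f₁, f₂)` of two-variable power series, vanishing at the origin, with `‖f_j‖_r ≤ r`,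
whose Jacobian matrix at the origin lies in `GL₂(R)` (entries of norm `≤ 1`, determinant of
norm `1`), and such that `f₂(T,0) = φ(f₁(T,0))`. -/
def GraphTrivAt {K : Type*} [NormedField K] (φ : PowerSeries K) (r : ℝ) : Prop :=
  ∃ f₁ f₂ : MvPowerSeries (Fin 2) K,
    MvPowerSeries.constantCoeff f₁ = 0 ∧
    MvPowerSeries.constantCoeff f₂ = 0 ∧
    NormLE r f₁ r ∧ NormLE r f₂ r ∧
    ‖MvPowerSeries.coeff (Finsupp.single (0 : Fin 2) 1) f₁‖ ≤ 1 ∧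
    ‖MvPowerSeries.coeff (Finsupp.single (1 : Fin 2) 1) f₁‖ ≤ 1 ∧
    ‖MvPowerSeries.coeff (Finsupp.single (0 : Fin 2) 1) f₂‖ ≤ 1 ∧
    ‖MvPowerSeries.coeff (Finsupp.single (1 : Fin 2) 1) f₂‖ ≤ 1 ∧
    ‖MvPowerSeries.coeff (Finsupp.single (0 : Fin 2) 1) f₁ *
        MvPowerSeries.coeff (Finsupp.single (1 : Fin 2) 1) f₂ -
      MvPowerSeries.coeff (Finsupp.single (1 : Fin 2) 1) f₁ *
        MvPowerSeries.coeff (Finsupp.single (0 : Fin 2) 1) f₂‖ = 1 ∧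
    line1 f₂ = comp φ (line1 f₁)

end NA

namespace NA

/-- The term `(−log ‖c_{i+1}‖)/i` of the Newton polygon slope (with the convention
`−log 0 = +∞`), as an extended real number; here `x = ‖c_{i+1}‖` and `i ≥ 1`. -/
def slopeTerm (x : ℝ) (i : ℕ) : EReal :=
  if x = 0 then ⊤ else (((-Real.log x) / (i : ℝ) : ℝ) : EReal)

/-- The first slope `λ₁ = inf_{i ≥ 1} (−log ‖c_{i+1}‖)/i ∈ (−∞, +∞]` of the Newton polygon of
`φ(x)/x`, for `φ = Σ_{i≥1} c_i X^i` (the infimum is reindexed by `i = j + 1`, `j : ℕ`). -/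
def firstSlope {K : Type*} [NormedField K] (φ : PowerSeries K) : EReal :=
  ⨅ j : ℕ, slopeTerm ‖PowerSeries.coeff (j + 2) φ‖ (j + 1)

/-- `min(1, exp λ)` for an extended real number `λ`. -/
def minOneExp (l : EReal) : ℝ :=
  if l = ⊤ then 1 else if l = ⊥ then 0 else min 1 (Real.exp l.toReal)

end NA

/-!
For `r ∈ (0,1]`, the graph of `φ` is analytically trivialized at radius `r` exactly when
`‖c_n‖ rⁿ ≤ r` for all `n`. If this holds, `(X₀, X₁ + φ(X₀))` is a trivialization. Conversely,
put `u = f₁(T,0)`; the determinant condition forces `‖u₁‖ = 1`, and comparing the coefficients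
of `Tⁿ` in `f₂(T,0) = φ(u)` gives `c_n u₁ⁿ = (f₂)_n - Σ_{k<n} c_k (uᵏ)_n`, whence the bound by
induction on `n`, the Gauss norm being ultrametric and submultiplicative. Taking logarithms,
`‖c_{i+1}‖ rⁱ ≤ 1` for all `i ≥ 1` says `log r ≤ λ₁`, so the admissible radii form the interval
`(0, min(1, exp λ₁)]`, which is nonempty because `φ` converges on a disc.
-/

namespace NA

theorem norm_sub_le_max {E : Type*} [SeminormedAddGroup E] [IsUltrametricDist E] (a b : E) :
    ‖a - b‖ ≤ max ‖a‖ ‖b‖ := by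
  simpa [sub_eq_add_neg] using IsUltrametricDist.norm_add_le_max a (-b)

section Composition

variable {R : Type*} [CommSemiring R] {u : R⟦X⟧}

theorem coeff_pow_self (hu : constantCoeff u = 0) (n : ℕ) :
    coeff n (u ^ n) = coeff 1 u ^ n := by
  obtain ⟨v, rfl⟩ := X_dvd_iff.2 hu
  simpa [mul_pow, coeff_zero_eq_constantCoeff] using coeff_X_pow_mul (v ^ n) n 0

theorem coeff_comp (φ u : R⟦X⟧) (n : ℕ) :
    coeff n (comp φ u) = coeff n (∑ k ∈ Finset.range (n + 1), C (coeff k φ) * u ^ k) := by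
  simp [comp, map_sum, coeff_C_mul]

theorem coeff_comp_eq_add (φ : R⟦X⟧) (hu : constantCoeff u = 0) (n : ℕ) :
    coeff n (comp φ u) =
      coeff n (∑ k ∈ Finset.range n, C (coeff k φ) * u ^ k) + coeff n φ * coeff 1 u ^ n := by
  rw [coeff_comp, Finset.sum_range_succ, map_add, coeff_C_mul, coeff_pow_self hu]

theorem comp_X (φ : R⟦X⟧) : comp φ X = φ := by
  ext n
  simp [coeff_comp, map_sum, coeff_C_mul, coeff_X_pow]

end Composition

variable {K : Type*} [NormedField K]

/-- `‖u‖_r ≤ c` for the Gauss norm of a one-variable power series. -/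
def NormLE₁ (r : ℝ) (u : K⟦X⟧) (c : ℝ) : Prop :=
  ∀ n, ‖coeff n u‖ * r ^ n ≤ c

namespace NormLE₁

variable {r c d : ℝ} {u v : K⟦X⟧}

theorem nonneg (h : NormLE₁ r u c) : 0 ≤ c :=
  (norm_nonneg _).trans (by simpa using h 0)

theorem mono (h : NormLE₁ r u c) (hcd : c ≤ d) : NormLE₁ r u d :=
  fun n => (h n).trans hcd

theorem one : NormLE₁ r (1 : K⟦X⟧) 1 := by
  intro n
  by_cases hn : n = 0 <;> simp [coeff_one, hn]

theorem C_mul (h : NormLE₁ r u c) (a : K) : NormLE₁ r (C a * u) (‖a‖ * c) := by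
  intro n
  rw [coeff_C_mul, norm_mul, mul_assoc]
  exact mul_le_mul_of_nonneg_left (h n) (norm_nonneg a)

variable [IsUltrametricDist K]

theorem mul (hr : 0 ≤ r) (hu : NormLE₁ r u c) (hv : NormLE₁ r v d) :
    NormLE₁ r (u * v) (c * d) := by
  intro n
  obtain ⟨⟨p, q⟩, hpq, hle⟩ := IsUltrametricDist.exists_norm_finsetSum_le_of_nonempty
    (t := Finset.HasAntidiagonal.antidiagonal n) ⟨(0, n), by simp⟩
    fun x => coeff x.1 u * coeff x.2 v
  rw [Finset.HasAntidiagonal.mem_antidiagonal] at hpq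
  calc ‖coeff n (u * v)‖ * r ^ n
      ≤ ‖coeff p u * coeff q v‖ * r ^ n := by
        rw [coeff_mul]; exact mul_le_mul_of_nonneg_right hle (by positivity)
    _ = (‖coeff p u‖ * r ^ p) * (‖coeff q v‖ * r ^ q) := by
        rw [← hpq, pow_add, norm_mul]; ring
    _ ≤ c * d := mul_le_mul (hu p) (hv q) (by positivity) hu.nonneg

theorem pow (hr : 0 ≤ r) (h : NormLE₁ r u c) (k : ℕ) : NormLE₁ r (u ^ k) (c ^ k) := by
  induction k with
  | zero => simpa using one
  | succ k ih => simpa [pow_succ] using ih.mul hr h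

theorem sum {ι : Type*} {s : Finset ι} {f : ι → K⟦X⟧} (hr : 0 ≤ r) (hc : 0 ≤ c)
    (h : ∀ i ∈ s, NormLE₁ r (f i) c) : NormLE₁ r (∑ i ∈ s, f i) c := by
  intro n
  rcases s.eq_empty_or_nonempty with rfl | hs
  · simpa using hc
  obtain ⟨i, hi, hle⟩ :=
    IsUltrametricDist.exists_norm_finsetSum_le_of_nonempty hs fun i => coeff n (f i)
  rw [map_sum]
  exact (mul_le_mul_of_nonneg_right hle (by positivity)).trans (h i hi n)

theorem of_comp {φ : K⟦X⟧} (hr : 0 ≤ r) (hu0 : constantCoeff u = 0) (hu1 : ‖coeff 1 u‖ = 1)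
    (hu : NormLE₁ r u r) (hφu : NormLE₁ r (comp φ u) r) : NormLE₁ r φ r := by
  refine fun n => Nat.strong_induction_on n fun n ih => ?_
  set w := ∑ k ∈ Finset.range n, C (coeff k φ) * u ^ k
  have hw : NormLE₁ r w r := sum hr hr fun k hk =>
    ((hu.pow hr k).C_mul _).mono (ih k (Finset.mem_range.1 hk))
  have hcoeff : coeff n φ * coeff 1 u ^ n = coeff n (comp φ u) - coeff n w := by
    rw [coeff_comp_eq_add φ hu0]; ring
  calc ‖coeff n φ‖ * r ^ n = ‖coeff n (comp φ u) - coeff n w‖ * r ^ n := by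
        rw [← hcoeff, norm_mul, norm_pow, hu1, one_pow, mul_one]
    _ ≤ max ‖coeff n (comp φ u)‖ ‖coeff n w‖ * r ^ n :=
        mul_le_mul_of_nonneg_right (norm_sub_le_max _ _) (by positivity)
    _ = max (‖coeff n (comp φ u)‖ * r ^ n) (‖coeff n w‖ * r ^ n) :=
        max_mul_of_nonneg _ _ (by positivity)
    _ ≤ r := max_le (hφu n) (hw n)

end NormLE₁

theorem one_le_max_norm_of_norm_det_eq_one [IsUltrametricDist K] {a b c d : K} (hb : ‖b‖ ≤ 1)
    (hd : ‖d‖ ≤ 1) (h : ‖a * d - b * c‖ = 1) : 1 ≤ max ‖a‖ ‖c‖ := by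
  calc 1 = ‖a * d - b * c‖ := h.symm
    _ ≤ max (‖a‖ * ‖d‖) (‖b‖ * ‖c‖) := by
        simpa only [norm_mul] using norm_sub_le_max (a * d) (b * c)
    _ ≤ max ‖a‖ ‖c‖ := max_le_max (mul_le_of_le_one_right (norm_nonneg a) hd)
        (mul_le_of_le_one_left (norm_nonneg c) hb)

/-- The two-variable series `φ(X₀)`. -/
def substX₀ (φ : K⟦X⟧) : MvPowerSeries (Fin 2) K :=
  fun I => if I 1 = 0 then coeff (I 0) φ else 0

theorem coeff_substX₀ (φ : K⟦X⟧) (I : Fin 2 →₀ ℕ) :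
    MvPowerSeries.coeff I (substX₀ φ) = if I 1 = 0 then coeff (I 0) φ else 0 :=
  rfl

theorem constantCoeff_substX₀ (φ : K⟦X⟧) :
    MvPowerSeries.constantCoeff (substX₀ φ) = constantCoeff φ := by
  simp [← MvPowerSeries.coeff_zero_eq_constantCoeff_apply, coeff_substX₀]

@[simp]
theorem coeff_line1 (f : MvPowerSeries (Fin 2) K) (n : ℕ) :
    coeff n (line1 f) = MvPowerSeries.coeff (Finsupp.single 0 n) f :=
  coeff_mk _ _

theorem line1_add (f g : MvPowerSeries (Fin 2) K) : line1 (f + g) = line1 f + line1 g := by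
  ext n; simp

theorem line1_X_zero : line1 (MvPowerSeries.X 0 : MvPowerSeries (Fin 2) K) = X := by
  ext n; simp [MvPowerSeries.coeff_X, coeff_X, (Finsupp.single_injective _).eq_iff]

theorem line1_X_one : line1 (MvPowerSeries.X 1 : MvPowerSeries (Fin 2) K) = 0 := by
  ext n; simp [MvPowerSeries.coeff_X, Finsupp.single_eq_single_iff]

theorem line1_substX₀ (φ : K⟦X⟧) : line1 (substX₀ φ) = φ := by
  ext n; simp [coeff_substX₀]

theorem NormLE.line1 {r c : ℝ} {f : MvPowerSeries (Fin 2) K} (h : NormLE r f c) :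
    NormLE₁ r (line1 f) c := by
  intro n
  simpa [Fin.sum_univ_two] using h (Finsupp.single 0 n)

theorem NormLE₁.substX₀ {r c : ℝ} {φ : K⟦X⟧} (h : NormLE₁ r φ c) : NormLE r (substX₀ φ) c := by
  intro I
  rw [coeff_substX₀]
  split_ifs with hI
  · simpa [Fin.sum_univ_two, hI] using h (I 0)
  · simpa using h.nonneg

theorem normLE_X {N : ℕ} {r : ℝ} (hr : 0 ≤ r) (i : Fin N) :
    NormLE r (MvPowerSeries.X i : MvPowerSeries (Fin N) K) r := by
  intro I
  rw [MvPowerSeries.coeff_X]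
  split_ifs with hI
  · simp [hI]
  · simpa using hr

theorem NormLE.add [IsUltrametricDist K] {N : ℕ} {r c : ℝ} {f g : MvPowerSeries (Fin N) K}
    (hr : 0 ≤ r) (hf : NormLE r f c) (hg : NormLE r g c) : NormLE r (f + g) c := by
  intro I
  calc ‖MvPowerSeries.coeff I (f + g)‖ * r ^ (∑ j, I j)
      ≤ max ‖MvPowerSeries.coeff I f‖ ‖MvPowerSeries.coeff I g‖ * r ^ (∑ j, I j) :=
        mul_le_mul_of_nonneg_right (by simpa using IsUltrametricDist.norm_add_le_max _ _)
          (by positivity)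
    _ ≤ c := by rw [max_mul_of_nonneg _ _ (by positivity)]; exact max_le (hf I) (hg I)

theorem graphTrivAt_of_normLE₁ [IsUltrametricDist K] {φ : K⟦X⟧} {r : ℝ} (hr : 0 < r)
    (hφ0 : constantCoeff φ = 0) (h : NormLE₁ r φ r) : GraphTrivAt φ r := by
  have hc1 : ‖coeff 1 φ‖ ≤ 1 := le_of_mul_le_mul_right (by simpa using h 1) hr
  refine ⟨MvPowerSeries.X 0, MvPowerSeries.X 1 + substX₀ φ, MvPowerSeries.constantCoeff_X 0,
    by simp [constantCoeff_substX₀, hφ0], normLE_X hr.le 0,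
    (normLE_X hr.le 1).add hr.le h.substX₀, ?_, ?_, ?_, ?_, ?_,
    by rw [line1_add, line1_X_zero, line1_X_one, line1_substX₀, zero_add, comp_X]⟩
  all_goals simp [MvPowerSeries.coeff_X, coeff_substX₀, hc1, Finsupp.single_eq_single_iff]

theorem normLE₁_of_graphTrivAt [IsUltrametricDist K] {φ : K⟦X⟧} {r : ℝ} (hr : 0 ≤ r)
    (hc1 : ‖coeff 1 φ‖ = 1) (h : GraphTrivAt φ r) : NormLE₁ r φ r := by
  obtain ⟨f₁, f₂, h₁0, -, h₁, h₂, ha, hb, -, hd, hdet, hcomp⟩ := h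
  have hu0 : constantCoeff (line1 f₁) = 0 := by
    simpa [← coeff_zero_eq_constantCoeff_apply] using h₁0
  have hc : MvPowerSeries.coeff (Finsupp.single 0 1) f₂ =
      coeff 1 φ * MvPowerSeries.coeff (Finsupp.single 0 1) f₁ := by
    simpa [coeff_comp_eq_add φ hu0, coeff_C] using congrArg (coeff 1) hcomp
  have hu1 : ‖coeff 1 (line1 f₁)‖ = 1 := by
    refine le_antisymm (by simpa using ha) ?_
    simpa [hc, hc1] using one_le_max_norm_of_norm_det_eq_one hb hd hdet
  exact NormLE₁.of_comp hr hu0 hu1 h₁.line1 (hcomp ▸ h₂.line1)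

theorem normLE₁_iff_forall_norm_coeff_mul_pow_le_one {φ : K⟦X⟧} {r : ℝ} (hr : 0 < r)
    (hφ0 : constantCoeff φ = 0) (hc1 : ‖coeff 1 φ‖ ≤ 1) :
    NormLE₁ r φ r ↔ ∀ j, ‖coeff (j + 2) φ‖ * r ^ (j + 1) ≤ 1 := by
  have hshift (j : ℕ) : ‖coeff (j + 2) φ‖ * r ^ (j + 2) ≤ r ↔
      ‖coeff (j + 2) φ‖ * r ^ (j + 1) ≤ 1 := by
    rw [pow_succ, ← mul_assoc, mul_le_iff_le_one_left hr]
  refine ⟨fun h j => (hshift j).1 (h (j + 2)), fun h n => ?_⟩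
  match n with
  | 0 => simpa [hφ0] using hr.le
  | 1 => simpa using mul_le_of_le_one_left hr.le hc1
  | j + 2 => exact (hshift j).2 (h j)

theorem log_le_slopeTerm_iff {x r : ℝ} (hx : 0 ≤ x) (hr : 0 < r) {i : ℕ} (hi : 0 < i) :
    (Real.log r : EReal) ≤ slopeTerm x i ↔ x * r ^ i ≤ 1 := by
  rcases hx.eq_or_lt with rfl | hx
  · simp [slopeTerm]
  have hi' : (0 : ℝ) < i := Nat.cast_pos.2 hi
  rw [slopeTerm, if_neg hx.ne', EReal.coe_le_coe_iff, le_div_iff₀ hi',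
    ← Real.log_nonpos_iff (by positivity), Real.log_mul hx.ne' (by positivity), Real.log_pow]
  constructor <;> intro h <;> linarith

theorem le_minOneExp_iff {l : EReal} {r : ℝ} (hr0 : 0 < r) (hr1 : r ≤ 1) :
    r ≤ minOneExp l ↔ (Real.log r : EReal) ≤ l := by
  induction l with
  | bot => simp [minOneExp, hr0.not_ge]
  | coe y => simp [minOneExp, hr1, Real.log_le_iff_le_exp hr0]
  | top => simp [minOneExp, hr1]

theorem minOneExp_le_one (l : EReal) : minOneExp l ≤ 1 := by
  unfold minOneExp
  split_ifs
  exacts [le_rfl, zero_le_one, min_le_left _ _]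

theorem le_minOneExp_firstSlope_iff {φ : K⟦X⟧} {r : ℝ} (hr0 : 0 < r) (hr1 : r ≤ 1) :
    r ≤ minOneExp (firstSlope φ) ↔ ∀ j, ‖coeff (j + 2) φ‖ * r ^ (j + 1) ≤ 1 := by
  rw [le_minOneExp_iff hr0 hr1, firstSlope, le_iInf_iff]
  exact forall_congr' fun j => log_le_slopeTerm_iff (norm_nonneg _) hr0 j.succ_pos

theorem exists_pos_forall_mul_pow_le_one {a : ℕ → ℝ} (ha : ∀ n, 0 ≤ a n) {s : ℝ} (hs : 0 < s)
    (hbdd : BddAbove (Set.range fun n => a n * s ^ n)) :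
    ∃ r, 0 < r ∧ r ≤ 1 ∧ ∀ j, a (j + 2) * r ^ (j + 1) ≤ 1 := by
  obtain ⟨M, hM⟩ := hbdd
  set M' := max M 1
  set t := min s 1
  have ht : 0 < t := lt_min hs one_pos
  have htM : t / M' ≤ 1 :=
    div_le_one_of_le₀ ((min_le_right s 1).trans (le_max_right M 1)) (by positivity)
  refine ⟨t * (t / M'), by positivity, mul_le_one₀ (min_le_right s 1) (by positivity) htM,
    fun j => ?_⟩
  calc a (j + 2) * (t * (t / M')) ^ (j + 1)
      = a (j + 2) * t ^ (j + 1) * (t / M') ^ (j + 1) := by rw [mul_pow]; ring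
    _ ≤ a (j + 2) * t ^ (j + 1) * (t / M') :=
        mul_le_mul_of_nonneg_left (pow_le_of_le_one (by positivity) htM (by omega))
          (mul_nonneg (ha _) (by positivity))
    _ = a (j + 2) * t ^ (j + 2) / M' := by ring
    _ ≤ a (j + 2) * s ^ (j + 2) / M' := by
        gcongr
        · exact ha _
        · exact min_le_left s 1
    _ ≤ M / M' := by gcongr; exact hM ⟨j + 2, rfl⟩
    _ ≤ 1 := div_le_one_of_le₀ (le_max_left M 1) (by positivity)

theorem graphTrivAt_iff_le_minOneExp [IsUltrametricDist K] {φ : K⟦X⟧} {r : ℝ} (hr0 : 0 < r)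
    (hr1 : r ≤ 1) (hφ0 : constantCoeff φ = 0) (hc1 : ‖coeff 1 φ‖ = 1) :
    GraphTrivAt φ r ↔ r ≤ minOneExp (firstSlope φ) := by
  rw [le_minOneExp_firstSlope_iff hr0 hr1,
    ← normLE₁_iff_forall_norm_coeff_mul_pow_le_one hr0 hφ0 hc1.le]
  exact ⟨normLE₁_of_graphTrivAt hr0.le hc1, graphTrivAt_of_normLE₁ hr0 hφ0⟩

end NA

theorem size_graph_eq_min_one_exp_firstSlope_general
    {K : Type*} [NontriviallyNormedField K] [IsUltrametricDist K]
    (φ : PowerSeries K) (hφ0 : PowerSeries.constantCoeff φ = 0)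
    (hc1 : ‖PowerSeries.coeff 1 φ‖ = 1)
    (hρ : ∃ s : ℝ, 0 < s ∧
      Filter.Tendsto (fun i : ℕ => ‖PowerSeries.coeff i φ‖ * s ^ i)
        Filter.atTop (nhds 0)) :
    sSup {r : ℝ | r ∈ Set.Ioc (0 : ℝ) 1 ∧ NA.GraphTrivAt φ r}
      = NA.minOneExp (NA.firstSlope φ) := by
  obtain ⟨s, hs, hlim⟩ := hρ
  obtain ⟨r₀, hr₀, hr₀1, hr₀φ⟩ :=
    NA.exists_pos_forall_mul_pow_le_one (fun n => norm_nonneg (coeff n φ)) hs hlim.bddAbove_range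
  have hpos : 0 < NA.minOneExp (NA.firstSlope φ) :=
    hr₀.trans_le ((NA.le_minOneExp_firstSlope_iff hr₀ hr₀1).2 hr₀φ)
  have hS : {r : ℝ | r ∈ Set.Ioc (0 : ℝ) 1 ∧ NA.GraphTrivAt φ r} =
      Set.Ioc 0 (NA.minOneExp (NA.firstSlope φ)) := by
    ext r
    simp only [Set.mem_ofPred_eq, Set.mem_Ioc]
    constructor
    · rintro ⟨⟨hr0, hr1⟩, h⟩
      exact ⟨hr0, (NA.graphTrivAt_iff_le_minOneExp hr0 hr1 hφ0 hc1).1 h⟩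
    · rintro ⟨hr0, hr⟩
      have hr1 := hr.trans (NA.minOneExp_le_one _)
      exact ⟨⟨hr0, hr1⟩, (NA.graphTrivAt_iff_le_minOneExp hr0 hr1 hφ0 hc1).2 hr⟩
  rw [hS, csSup_Ioc hpos]

/-- **Proposition 3.6, part 2** (Bost–Chambert-Loir): over a complete discretely valued
nonarchimedean field `K` with valuation ring `R`, if `φ = Σ_{i≥1} c_i X^i ∈ K⟦X⟧` has
positive radius of convergence and `φ'(0)` is a unit of `R` (`‖c₁‖ = 1`), then the size of
the graph of `φ` — i.e. the supremum of the radii `r ∈ (0,1]` at which the graph of `φ` is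
analytically trivialized — equals `min(1, exp λ₁)`, where `λ₁` is the first slope of the
Newton polygon of `φ(x)/x`. -/
theorem size_graph_eq_min_one_exp_firstSlope
    {K : Type*} [NontriviallyNormedField K] [CompleteSpace K] [IsUltrametricDist K]
    [IsDiscreteValuationRing (NA.integers K)]
    (φ : PowerSeries K) (hφ0 : PowerSeries.constantCoeff φ = 0)
    (hc1 : ‖PowerSeries.coeff 1 φ‖ = 1)
    (hρ : ∃ s : ℝ, 0 < s ∧
      Filter.Tendsto (fun i : ℕ => ‖PowerSeries.coeff i φ‖ * s ^ i)
        Filter.atTop (nhds 0)) :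
    sSup {r : ℝ | r ∈ Set.Ioc (0 : ℝ) 1 ∧ NA.GraphTrivAt φ r}
      = NA.minOneExp (NA.firstSlope φ) :=
  size_graph_eq_min_one_exp_firstSlope_general φ hφ0 hc1 hρ
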